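/- arXiv:2508.12874 — 2 statements merged into one kernel-verified Lean document; each statement's English description precedes it below -/
import Mathlib

section
/- With notation as above (φ, ψ continuous 1-periodic, Φ their primitive, F(f̃) = ∫₀¹ (Φ(θ) − Φ(f̃(θ)))ψ(θ)dθ on the group of homeomorphisms of ℝ commuting with T), the coboundary δF(f̃,g̃) = F(f̃) + F(g̃) − F(f̃ ∘ g̃) is invariant under replacing f̃ by Tᵐ f̃ and g̃ by Tⁿ g̃ for any m, n ∈ ℤ; hence δF descends to a well-defined real-valued 2-cocycle on the quotient group of circle homeomorphisms. -/
/-!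
Since `Φ (θ + n) = Φ θ + n A`, post-composing a lift with `Tⁿ` changes `F` by the constant
`-n A ∫₀¹ ψ`. For lifts, `Tᵐ f̃ ∘ Tⁿ g̃ = Tᵐ⁺ⁿ (f̃ ∘ g̃)`, so the three constants in `δF` cancel.
The cocycle identity holds for the coboundary of any function on a monoid of self-maps.
-/

open MeasureTheory

theorem map_add_intCast_of_map_add_one {f : ℝ → ℝ} (hf : ∀ x, f (x + 1) = f x + 1)
    (n : ℤ) (x : ℝ) : f (x + n) = f x + n := by
  have hper : Function.Periodic (fun x => f x - x) 1 := fun x => by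
    simp only [hf]; ring
  have := (hper.int_mul n) x
  simp only [mul_one] at this
  linarith

theorem integral_sub_const_mul {g ψ : ℝ → ℝ} {a b : ℝ}
    (hg : IntervalIntegrable (fun θ => g θ * ψ θ) volume a b)
    (hψ : IntervalIntegrable ψ volume a b) (k : ℝ) :
    ∫ θ in a..b, (g θ - k) * ψ θ = (∫ θ in a..b, g θ * ψ θ) - k * ∫ θ in a..b, ψ θ := by
  simp only [sub_mul]
  rw [intervalIntegral.integral_sub hg (hψ.const_mul k), intervalIntegral.integral_const_mul]

noncomputable def liftFunctional (Φ ψ u : ℝ → ℝ) : ℝ :=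
  ∫ θ in (0:ℝ)..1, (Φ θ - Φ (u θ)) * ψ θ

theorem liftFunctional_add_intCast {Φ ψ u : ℝ → ℝ} {A : ℝ} (hΦc : Continuous Φ)
    (hΦ : ∀ (n : ℤ) (θ : ℝ), Φ (θ + n) = Φ θ + n * A) (hψ : Continuous ψ)
    (hu : Continuous u) (n : ℤ) :
    liftFunctional Φ ψ (fun θ => u θ + n) =
      liftFunctional Φ ψ u - n * A * ∫ θ in (0:ℝ)..1, ψ θ := by
  have hint : IntervalIntegrable (fun θ => (Φ θ - Φ (u θ)) * ψ θ) volume 0 1 :=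
    (by fun_prop : Continuous fun θ => (Φ θ - Φ (u θ)) * ψ θ).intervalIntegrable 0 1
  simp only [liftFunctional, hΦ, ← sub_sub]
  rw [integral_sub_const_mul hint (hψ.intervalIntegrable 0 1), mul_assoc]

def coboundary {α : Type*} (F : (α → α) → ℝ) (f g : α → α) : ℝ :=
  F f + F g - F (f ∘ g)

theorem coboundary_cocycle {α : Type*} (F : (α → α) → ℝ) (f g h : α → α) :
    coboundary F g h - coboundary F (f ∘ g) h + coboundary F f (g ∘ h) - coboundary F f g = 0 := by
  simp only [coboundary, Function.comp_assoc]
  ring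

theorem stmt_7_general (Φ ψ : ℝ → ℝ) (A : ℝ) (hΦc : Continuous Φ)
    (hΦ : ∀ (n : ℤ) (θ : ℝ), Φ (θ + n) = Φ θ + n * A)
    (hψ : Continuous ψ) :
    ∃ c : (ℝ ≃ₜ ℝ) → (ℝ ≃ₜ ℝ) → ℝ,
      (∀ f g : ℝ ≃ₜ ℝ, (∀ x, f (x + 1) = f x + 1) → (∀ x, g (x + 1) = g x + 1) →
        ∀ m n : ℤ,
          (∫ θ in (0:ℝ)..1, (Φ θ - Φ (f θ + m)) * ψ θ)
          + (∫ θ in (0:ℝ)..1, (Φ θ - Φ (g θ + n)) * ψ θ)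
          - (∫ θ in (0:ℝ)..1, (Φ θ - Φ (f (g θ + n) + m)) * ψ θ) = c f g)
      ∧ (∀ f g h : ℝ ≃ₜ ℝ,
          (∀ x, f (x + 1) = f x + 1) → (∀ x, g (x + 1) = g x + 1) →
          (∀ x, h (x + 1) = h x + 1) →
          c g h - c (g.trans f) h + c f (h.trans g) - c f g = 0) := by
  refine ⟨fun f g => coboundary (liftFunctional Φ ψ) f g, fun f g hf _ m n => ?_,
    fun f g h _ _ _ => ?_⟩
  · have hfg : (fun θ => f (g θ + n) + m) = fun θ => (f ∘ g) θ + ((n + m : ℤ) : ℝ) := by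
      funext θ
      rw [map_add_intCast_of_map_add_one hf, Function.comp_apply]
      push_cast
      ring
    change liftFunctional Φ ψ (fun θ => f θ + m) + liftFunctional Φ ψ (fun θ => g θ + n)
      - liftFunctional Φ ψ (fun θ => f (g θ + n) + m) = coboundary (liftFunctional Φ ψ) f g
    rw [hfg, coboundary]
    simp only [liftFunctional_add_intCast hΦc hΦ hψ, f.continuous, g.continuous,
      f.continuous.comp g.continuous]
    push_cast
    ring
  · exact coboundary_cocycle _ f g h

/-- With `Φ` continuous satisfying `Φ (θ + n) = Φ θ + n A` and `ψ` continuous 1-periodic,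
set `F f̃ = ∫₀¹ (Φ θ - Φ (f̃ θ)) ψ θ dθ` on lifts (homeomorphisms of `ℝ` commuting with
`T x = x + 1`). The coboundary `δF (f̃, g̃) = F f̃ + F g̃ - F (f̃ ∘ g̃)` is invariant under
replacing `f̃` by `Tᵐ f̃` and `g̃` by `Tⁿ g̃`; hence it descends to a well-defined real-valued
2-cocycle `c` on the quotient group of circle homeomorphisms. -/
theorem stmt_7 (Φ ψ : ℝ → ℝ) (A : ℝ) (hΦc : Continuous Φ)
    (hΦ : ∀ (n : ℤ) (θ : ℝ), Φ (θ + n) = Φ θ + n * A)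
    (hψ : Continuous ψ) (hψp : Function.Periodic ψ 1) :
    ∃ c : (ℝ ≃ₜ ℝ) → (ℝ ≃ₜ ℝ) → ℝ,
      (∀ f g : ℝ ≃ₜ ℝ, (∀ x, f (x + 1) = f x + 1) → (∀ x, g (x + 1) = g x + 1) →
        ∀ m n : ℤ,
          (∫ θ in (0:ℝ)..1, (Φ θ - Φ (f θ + m)) * ψ θ)
          + (∫ θ in (0:ℝ)..1, (Φ θ - Φ (g θ + n)) * ψ θ)
          - (∫ θ in (0:ℝ)..1, (Φ θ - Φ (f (g θ + n) + m)) * ψ θ) = c f g)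
      ∧ (∀ f g h : ℝ ≃ₜ ℝ,
          (∀ x, f (x + 1) = f x + 1) → (∀ x, g (x + 1) = g x + 1) →
          (∀ x, h (x + 1) = h x + 1) →
          c g h - c (g.trans f) h + c f (h.trans g) - c f g = 0) :=
  stmt_7_general Φ ψ A hΦc hΦ hψ
end

section
/- Thurston's trick (algebraic core): Let G be a group and φ ∈ G. Suppose u, v, g ∈ G are such that the supports satisfy: u φ u⁻¹ φ⁻¹ = a·b where a has support in a set S₁ and b has support in φ(S₁); v and (gφ)v⁻¹(gφ)⁻¹ have supports in S₁ and gφ(S₁) respectively; and S₁, φ(S₁), gφ(S₁) are pairwise disjoint. Then [u,v] = [[u,φ],[v,gφg⁻¹]]. In particular [u,v] lies in the normal closure of φ whenever [u,φ] and [v, gφg⁻¹] do. -/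
/-!
Write `[u,φ] = u·b` and `[v,gφg⁻¹] = v·d` with `b = φu⁻¹φ⁻¹` and `d = (gφ)v⁻¹(gφ)⁻¹`.
By the disjointness of `S₁`, `φ(S₁)`, `gφ(S₁)`, the factor `b` commutes with `v` and with `d`,
and `d` commutes with `u`; so `b` drops out of `[ub, vd]`, then `d` does, leaving `[u,v]`.
-/

open scoped commutatorElement

namespace MulAction

variable {G α : Type*} [Group G] [MulAction G α]

theorem smul_smul_eq_of_disjoint_movedBy {g h : G}
    (hgh : Disjoint (fixedBy α g)ᶜ (fixedBy α h)ᶜ) {x : α} (hx : x ∈ (fixedBy α g)ᶜ) :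
    g • h • x = h • g • x := by
  have hgx : g • x ∈ (fixedBy α g)ᶜ := by
    simpa only [Set.mem_compl_iff, smul_mem_fixedBy_iff_mem_fixedBy] using hx
  have hhx : h • x = x := not_not.mp (Set.disjoint_left.mp hgh hx)
  have hhgx : h • g • x = g • x := not_not.mp (Set.disjoint_left.mp hgh hgx)
  rw [hhx, hhgx]

theorem commute_of_disjoint_movedBy [FaithfulSMul G α] {g h : G}
    (hgh : Disjoint (fixedBy α g)ᶜ (fixedBy α h)ᶜ) : Commute g h := by
  refine FaithfulSMul.eq_of_smul_eq_smul (α := α) fun x => ?_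
  rw [mul_smul, mul_smul]
  by_cases hgx : x ∈ fixedBy α g
  · by_cases hhx : x ∈ fixedBy α h
    · rw [show g • x = x from hgx, show h • x = x from hhx, hgx]
    · exact (smul_smul_eq_of_disjoint_movedBy hgh.symm hhx).symm
  · exact smul_smul_eq_of_disjoint_movedBy hgh hgx

end MulAction

section Commutator

variable {G : Type*} [Group G]

theorem commutatorElement_eq_mul_conj_inv (a c : G) : ⁅a, c⁆ = a * (c * a⁻¹ * c⁻¹) := by
  simp only [commutatorElement_def, mul_assoc]

theorem commutatorElement_conj_eq_mul_conj_inv {g v : G} (hgv : Commute g v) (φ : G) :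
    ⁅v, g * φ * g⁻¹⁆ = v * (g * φ * v⁻¹ * (g * φ)⁻¹) := by
  rw [commutatorElement_eq_mul_conj_inv]
  congr 1
  calc g * φ * g⁻¹ * v⁻¹ * (g * φ * g⁻¹)⁻¹ = g * φ * (g⁻¹ * v⁻¹ * g) * (g * φ)⁻¹ := by group
    _ = g * φ * v⁻¹ * (g * φ)⁻¹ := by rw [hgv.inv_right.inv_mul_cancel]

theorem commutatorElement_mul_left_of_commute {a b c : G} (hbc : Commute b c) :
    ⁅a * b, c⁆ = ⁅a, c⁆ := by
  rw [commutatorElement_mul_left_eq_conj_mul, commutatorElement_eq_one_iff_commute.mpr hbc,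
    mul_one, mul_inv_cancel, one_mul]

theorem commutatorElement_mul_right_of_commute {a b c : G} (hac : Commute a c) :
    ⁅a, b * c⁆ = ⁅a, b⁆ := by
  rw [commutatorElement_mul_right_eq_mul_conj, commutatorElement_eq_one_iff_commute.mpr hac,
    mul_one, mul_inv_cancel_right]

theorem commutatorElement_commutatorElement_mem_normalClosure (u φ w : G) :
    ⁅⁅u, φ⁆, w⁆ ∈ Subgroup.normalClosure {φ} := by
  let N := Subgroup.normalClosure ({φ} : Set G)
  have hφ : φ ∈ N := Subgroup.subset_normalClosure (Set.mem_singleton φ)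
  have huφ : ⁅u, φ⁆ ∈ N :=
    Subgroup.commutator_le_right ⊤ N (Subgroup.commutator_mem_commutator (Subgroup.mem_top u) hφ)
  exact Subgroup.commutator_le_left N ⊤
    (Subgroup.commutator_mem_commutator huφ (Subgroup.mem_top w))

end Commutator

/-- Thurston's trick (algebraic core): for a faithful action of `G` on `X`, if
`[u,φ] = u · (φ u⁻¹ φ⁻¹)` has its factors supported in `S₁` and `φ(S₁)`,
`[v, gφg⁻¹] = v · ((gφ) v⁻¹ (gφ)⁻¹)` has its factors supported in `S₁` and `gφ(S₁)`
(here `g` commutes with `v`, since `g` is the identity on the support of `v`), and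
`S₁, φ(S₁), gφ(S₁)` are pairwise disjoint, then `[u,v] = [[u,φ],[v,gφg⁻¹]]`; in
particular `[u,v]` lies in the normal closure of `φ`. -/
theorem stmt_11 {G X : Type*} [Group G] [MulAction G X] [FaithfulSMul G X]
    (φ u v g : G) (S₁ : Set X)
    (hu : ∀ x, u • x ≠ x → x ∈ S₁)
    (hb : ∀ x, (φ * u⁻¹ * φ⁻¹) • x ≠ x → x ∈ (fun y => φ • y) '' S₁)
    (hv : ∀ x, v • x ≠ x → x ∈ S₁)
    (hd : ∀ x, ((g * φ) * v⁻¹ * (g * φ)⁻¹) • x ≠ x → x ∈ (fun y => (g * φ) • y) '' S₁)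
    (hgv : g * v = v * g)
    (h₁ : Disjoint S₁ ((fun y => φ • y) '' S₁))
    (h₂ : Disjoint S₁ ((fun y => (g * φ) • y) '' S₁))
    (h₃ : Disjoint ((fun y => φ • y) '' S₁) ((fun y => (g * φ) • y) '' S₁)) :
    ⁅u, v⁆ = ⁅⁅u, φ⁆, ⁅v, g * φ * g⁻¹⁆⁆
    ∧ ⁅u, v⁆ ∈ Subgroup.normalClosure {φ} := by
  have hbv : Commute (φ * u⁻¹ * φ⁻¹) v :=
    MulAction.commute_of_disjoint_movedBy (h₁.symm.mono hb hv)
  have hbd : Commute (φ * u⁻¹ * φ⁻¹) ((g * φ) * v⁻¹ * (g * φ)⁻¹) :=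
    MulAction.commute_of_disjoint_movedBy (h₃.mono hb hd)
  have hud : Commute u ((g * φ) * v⁻¹ * (g * φ)⁻¹) :=
    MulAction.commute_of_disjoint_movedBy (h₂.mono hu hd)
  have key : ⁅u, v⁆ = ⁅⁅u, φ⁆, ⁅v, g * φ * g⁻¹⁆⁆ := by
    rw [commutatorElement_eq_mul_conj_inv u φ, commutatorElement_conj_eq_mul_conj_inv hgv,
      commutatorElement_mul_left_of_commute (hbv.mul_right hbd),
      commutatorElement_mul_right_of_commute hud]
  exact ⟨key, key ▸ commutatorElement_commutatorElement_mem_normalClosure u φ _⟩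
end
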